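/- Let (B, p⊥, τ) be a static anisotropic (CGL) plasma equilibrium on ℝ³ with τ(x) < 1 for every x, let p := p⊥ + τ|B|²/2 be the mean pressure, let A := curl( √(1 − τ) B ), and let f : ℝ → ℝ be any smooth function. Then div( f(p) A ) = 0 everywhere on ℝ³. (This is conservation of the flux related to the vorticity of the vector field √(1 − τ) B.) -/

import Mathlib

/-!
Since `div (f(p) A) = f'(p) A · ∇p + f(p) div A` and `A` is a curl, it suffices that `A ⟂ ∇p`.
Put `g = √(1 - τ)`, so `∇τ = -2g ∇g` and `B · ∇τ = 0` gives `B ⟂ ∇g`. The momentum balance turns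
into `∇p = g² (curl B × B) - g |B|² ∇g`, while `A = g curl B + ∇g × B`. Expanding `A · ∇p` with
`(∇g × B) · (curl B × B) = |B|² ∇g · curl B - (∇g · B)(B · curl B)`, the two surviving terms are
`g² |B|² ∇g · curl B` with opposite signs.
-/

open Matrix

noncomputable section

abbrev R3 : Type := Fin 3 → ℝ

def pd (i : Fin 3) (f : R3 → ℝ) (x : R3) : ℝ := fderiv ℝ f x (Pi.single i 1)

def grad3 (f : R3 → ℝ) (x : R3) : R3 := fun i => pd i f x

def div3 (B : R3 → R3) (x : R3) : ℝ := ∑ i, pd i (fun y => B y i) x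

def curl3 (B : R3 → R3) (x : R3) : R3 :=
  ![pd 1 (fun y => B y 2) x - pd 2 (fun y => B y 1) x,
    pd 2 (fun y => B y 0) x - pd 0 (fun y => B y 2) x,
    pd 0 (fun y => B y 1) x - pd 1 (fun y => B y 0) x]

@[fun_prop]
theorem DifferentiableAt.dotProduct {𝕜 E ι : Type*} [NontriviallyNormedField 𝕜]
    [NormedAddCommGroup E] [NormedSpace 𝕜 E] [Fintype ι] {u v : E → ι → 𝕜} {x : E}
    (hu : DifferentiableAt 𝕜 u x) (hv : DifferentiableAt 𝕜 v x) :
    DifferentiableAt 𝕜 (fun y => u y ⬝ᵥ v y) x :=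
  DifferentiableAt.fun_sum fun i _ => (differentiableAt_pi.1 hu i).mul (differentiableAt_pi.1 hv i)

section PartialDerivatives

variable {F G : R3 → ℝ} {x : R3}

lemma pd_add (i : Fin 3) (hF : DifferentiableAt ℝ F x) (hG : DifferentiableAt ℝ G x) :
    pd i (fun y => F y + G y) x = pd i F x + pd i G x := by
  simp [pd, fderiv_fun_add hF hG]

lemma pd_sub (i : Fin 3) (hF : DifferentiableAt ℝ F x) (hG : DifferentiableAt ℝ G x) :
    pd i (fun y => F y - G y) x = pd i F x - pd i G x := by
  simp [pd, fderiv_fun_sub hF hG]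

lemma pd_mul (i : Fin 3) (hF : DifferentiableAt ℝ F x) (hG : DifferentiableAt ℝ G x) :
    pd i (fun y => F y * G y) x = G x * pd i F x + F x * pd i G x := by
  simp only [pd, fderiv_fun_mul hF hG, _root_.add_apply, _root_.smul_apply, smul_eq_mul]
  ring

lemma pd_comp (i : Fin 3) {f : ℝ → ℝ} (hf : DifferentiableAt ℝ f (F x))
    (hF : DifferentiableAt ℝ F x) :
    pd i (fun y => f (F y)) x = deriv f (F x) * pd i F x := by
  simp [pd, fderiv_fun_comp x hf hF, mul_comm]

lemma differentiableAt_pd (i : Fin 3) (hF : ContDiffAt ℝ 2 F x) :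
    DifferentiableAt ℝ (pd i F) x :=
  ((hF.fderiv_right (m := 1) le_rfl).differentiableAt one_ne_zero).clm_apply
    (differentiableAt_const _)

lemma pd_pd_comm (hF : ContDiffAt ℝ 2 F x) (i j : Fin 3) :
    pd i (pd j F) x = pd j (pd i F) x := by
  have hF' := (hF.fderiv_right (m := 1) le_rfl).differentiableAt one_ne_zero
  have hsymm := hF.isSymmSndFDerivAt (by simp)
  have hpd : ∀ k, pd k F = fun y => fderiv ℝ F y (Pi.single k 1) := fun k => rfl
  simp only [pd, hpd, fderiv_clm_apply hF' (differentiableAt_const _)]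
  simpa using hsymm (Pi.single i 1) (Pi.single j 1)

end PartialDerivatives

section VectorCalculus

variable {φ F G : R3 → ℝ} {V : R3 → R3} {x : R3}

lemma grad3_add (hF : DifferentiableAt ℝ F x) (hG : DifferentiableAt ℝ G x) :
    grad3 (fun y => F y + G y) x = grad3 F x + grad3 G x :=
  funext fun i => pd_add i hF hG

lemma grad3_mul (hF : DifferentiableAt ℝ F x) (hG : DifferentiableAt ℝ G x) :
    grad3 (fun y => F y * G y) x = G x • grad3 F x + F x • grad3 G x :=
  funext fun i => pd_mul i hF hG

lemma grad3_comp {f : ℝ → ℝ} (hf : DifferentiableAt ℝ f (F x)) (hF : DifferentiableAt ℝ F x) :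
    grad3 (fun y => f (F y)) x = deriv f (F x) • grad3 F x :=
  funext fun i => pd_comp i hf hF

lemma div3_smul (hφ : DifferentiableAt ℝ φ x) (hV : DifferentiableAt ℝ V x) :
    div3 (fun y => φ y • V y) x = grad3 φ x ⬝ᵥ V x + φ x * div3 V x := by
  simp only [div3, grad3, dotProduct, Pi.smul_apply, smul_eq_mul,
    fun i => pd_mul i hφ (differentiableAt_pi.1 hV i), Finset.mul_sum, ← Finset.sum_add_distrib]
  exact Finset.sum_congr rfl fun i _ => by ring

lemma curl3_smul (hφ : DifferentiableAt ℝ φ x) (hV : DifferentiableAt ℝ V x) :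
    curl3 (fun y => φ y • V y) x = φ x • curl3 V x + grad3 φ x ⨯₃ V x := by
  have hVi := differentiableAt_pi.1 hV
  simp only [curl3, grad3, cross_apply, Pi.smul_apply, smul_eq_mul, pd_mul _ hφ (hVi _),
    smul_vec3, vec3_add]
  apply vec3_eq <;> ring

lemma differentiableAt_curl3 (hV : ContDiffAt ℝ 2 V x) : DifferentiableAt ℝ (curl3 V) x := by
  have hVi := contDiffAt_pi.1 hV
  refine differentiableAt_pi.2 fun i => ?_
  fin_cases i <;>
  exact (differentiableAt_pd _ (hVi _)).sub (differentiableAt_pd _ (hVi _))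

lemma div3_curl3 (hV : ContDiffAt ℝ 2 V x) : div3 (curl3 V) x = 0 := by
  have hVi := contDiffAt_pi.1 hV
  simp only [div3, curl3, Fin.sum_univ_three, Matrix.cons_val_zero, Matrix.cons_val_one,
    Matrix.cons_val_two, Matrix.head_cons, Matrix.tail_cons,
    pd_sub _ (differentiableAt_pd _ (hVi _)) (differentiableAt_pd _ (hVi _)),
    pd_pd_comm (hVi 0) 2 1, pd_pd_comm (hVi 1) 2 0, pd_pd_comm (hVi 2) 1 0]
  ring

end VectorCalculus

lemma grad3_eq_neg_two_mul_sqrt_smul {τ : R3 → ℝ} {x : R3} (hτ : DifferentiableAt ℝ τ x)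
    (hτx : τ x < 1) :
    grad3 τ x = -(2 * √(1 - τ x)) • grad3 (fun y => √(1 - τ y)) x := by
  have hs : √(1 - τ x) ≠ 0 := (Real.sqrt_pos.2 (sub_pos.2 hτx)).ne'
  have hderiv := ((hasDerivAt_id' (τ x)).const_sub 1).sqrt (sub_pos.2 hτx).ne'
  rw [grad3_comp (f := fun t => √(1 - t)) hderiv.differentiableAt hτ, hderiv.deriv, smul_smul]
  field_simp
  simp

lemma smul_add_cross_dotProduct_eq_zero {g : ℝ} {J B G : Fin 3 → ℝ} (hBG : B ⬝ᵥ G = 0) :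
    (g • J + G ⨯₃ B) ⬝ᵥ (g ^ 2 • J ⨯₃ B - (g * (B ⬝ᵥ B)) • G) = 0 := by
  simp only [add_dotProduct, dotProduct_sub, smul_dotProduct, dotProduct_smul, smul_eq_mul,
    dot_self_cross, cross_dot_cross, dotProduct_comm G B, dotProduct_comm G J, hBG]
  rw [dotProduct_comm (G ⨯₃ B) G, dot_self_cross]
  ring

section Equilibrium

variable {B : R3 → R3} {pperp τ : R3 → ℝ} {x : R3}

lemma grad3_meanPressure (hB : DifferentiableAt ℝ B x) (hpperp : DifferentiableAt ℝ pperp x)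
    (hτ : DifferentiableAt ℝ τ x)
    (hmom : (1 - τ x) • crossProduct (curl3 B x) (B x) =
      grad3 pperp x + τ x • grad3 (fun y => (B y ⬝ᵥ B y) / 2) x + (B x ⬝ᵥ grad3 τ x) • B x)
    (hstate : B x ⬝ᵥ grad3 τ x = 0) :
    grad3 (fun y => pperp y + τ y * (B y ⬝ᵥ B y) / 2) x =
      (1 - τ x) • curl3 B x ⨯₃ B x + ((B x ⬝ᵥ B x) / 2) • grad3 τ x := by
  have hE : DifferentiableAt ℝ (fun y => (B y ⬝ᵥ B y) / 2) x := by fun_prop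
  simp only [mul_div_assoc]
  rw [grad3_add hpperp (hτ.fun_mul hE), grad3_mul hτ hE, hmom, hstate, zero_smul, add_zero]
  abel

lemma curl3_sqrt_smul_dotProduct_grad3_meanPressure (hB : DifferentiableAt ℝ B x)
    (hpperp : DifferentiableAt ℝ pperp x) (hτ : DifferentiableAt ℝ τ x) (hτx : τ x < 1)
    (hmom : (1 - τ x) • crossProduct (curl3 B x) (B x) =
      grad3 pperp x + τ x • grad3 (fun y => (B y ⬝ᵥ B y) / 2) x + (B x ⬝ᵥ grad3 τ x) • B x)
    (hstate : B x ⬝ᵥ grad3 τ x = 0) :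
    curl3 (fun y => √(1 - τ y) • B y) x ⬝ᵥ
      grad3 (fun y => pperp y + τ y * (B y ⬝ᵥ B y) / 2) x = 0 := by
  have hgradτ := grad3_eq_neg_two_mul_sqrt_smul hτ hτx
  have hBg : B x ⬝ᵥ grad3 (fun y => √(1 - τ y)) x = 0 := by
    rw [hgradτ, dotProduct_smul, smul_eq_mul, mul_eq_zero] at hstate
    exact hstate.resolve_left (by simpa using (Real.sqrt_pos.2 (sub_pos.2 hτx)).ne')
  rw [curl3_smul ((hτ.const_sub 1).sqrt (sub_pos.2 hτx).ne') hB,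
    grad3_meanPressure hB hpperp hτ hmom hstate, hgradτ]
  convert smul_add_cross_dotProduct_eq_zero hBg using 2
  rw [Real.sq_sqrt (sub_pos.2 hτx).le]
  module

end Equilibrium

theorem cgl_vorticity_conservation_general
    (B : R3 → R3) (pperp τ : R3 → ℝ)
    (hB : ContDiff ℝ (⊤ : ℕ∞) B) (hpperp : ContDiff ℝ (⊤ : ℕ∞) pperp)
    (hτ : ContDiff ℝ (⊤ : ℕ∞) τ)
    (hτlt : ∀ x, τ x < 1)
    (hmom : ∀ x, (1 - τ x) • crossProduct (curl3 B x) (B x) =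
      grad3 pperp x + τ x • grad3 (fun y => (B y ⬝ᵥ B y) / 2) x + (B x ⬝ᵥ grad3 τ x) • B x)
    (hstate : ∀ x, B x ⬝ᵥ grad3 τ x = 0)
    (p : R3 → ℝ) (hp : p = fun x => pperp x + τ x * (B x ⬝ᵥ B x) / 2)
    (A : R3 → R3) (hA : A = fun x => curl3 (fun y => Real.sqrt (1 - τ y) • B y) x)
    (f : ℝ → ℝ) (hf : ContDiff ℝ (⊤ : ℕ∞) f) :
    ∀ x, div3 (fun y => f (p y) • A y) x = 0 := by
  intro x
  have hBd : Differentiable ℝ B := hB.differentiable (by simp)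
  have hpperpd : Differentiable ℝ pperp := hpperp.differentiable (by simp)
  have hτd : Differentiable ℝ τ := hτ.differentiable (by simp)
  have hV : ContDiffAt ℝ 2 (fun y => √(1 - τ y) • B y) x :=
    ((((contDiff_const.sub hτ).sqrt fun y => (sub_pos.2 (hτlt y)).ne').smul hB).of_le
      (WithTop.coe_le_coe.2 le_top)).contDiffAt
  have hpd : DifferentiableAt ℝ p x := by rw [hp]; fun_prop
  have hfd : DifferentiableAt ℝ f (p x) := hf.differentiable (by simp) _
  obtain rfl : A = curl3 (fun y => √(1 - τ y) • B y) := hA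
  rw [div3_smul (φ := fun y => f (p y)) (hfd.comp x hpd) (differentiableAt_curl3 hV),
    grad3_comp hfd hpd, div3_curl3 hV, mul_zero, add_zero, smul_dotProduct, dotProduct_comm, hp,
    curl3_sqrt_smul_dotProduct_grad3_meanPressure (hBd x) (hpperpd x) (hτd x) (hτlt x) (hmom x)
      (hstate x), smul_zero]

/-- Conservation of the flux related to the vorticity of `√(1−τ) B` for static
anisotropic (CGL) equilibria with `τ < 1`: with `A = curl(√(1−τ) B)` and `p = p⊥ + τ|B|²/2`,
`div(f(p) A) = 0` for any smooth `f`. -/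
theorem cgl_vorticity_conservation
    (B : R3 → R3) (pperp τ : R3 → ℝ)
    (hB : ContDiff ℝ (⊤ : ℕ∞) B) (hpperp : ContDiff ℝ (⊤ : ℕ∞) pperp)
    (hτ : ContDiff ℝ (⊤ : ℕ∞) τ)
    (hτlt : ∀ x, τ x < 1)
    (hmom : ∀ x, (1 - τ x) • crossProduct (curl3 B x) (B x) =
      grad3 pperp x + τ x • grad3 (fun y => (B y ⬝ᵥ B y) / 2) x + (B x ⬝ᵥ grad3 τ x) • B x)
    (hdiv : ∀ x, div3 B x = 0)
    (hstate : ∀ x, B x ⬝ᵥ grad3 τ x = 0)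
    (p : R3 → ℝ) (hp : p = fun x => pperp x + τ x * (B x ⬝ᵥ B x) / 2)
    (A : R3 → R3) (hA : A = fun x => curl3 (fun y => Real.sqrt (1 - τ y) • B y) x)
    (f : ℝ → ℝ) (hf : ContDiff ℝ (⊤ : ℕ∞) f) :
    ∀ x, div3 (fun y => f (p y) • A y) x = 0 :=
  cgl_vorticity_conservation_general B pperp τ hB hpperp hτ hτlt hmom hstate p hp A hA f hf
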